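/- arXiv:2009.13098 — 3 statements merged into one kernel-verified Lean document; each statement's English description precedes it below -/
import Mathlib

section
/- Let r, N ≥ 1, let γ : [0,1] → ℂ be a continuously differentiable curve, and let W : ℂ → M_r(ℂ) be continuous on the image of γ. Suppose for each j = 0,…,N−1 there exist: a monic r×r matrix polynomial P_j^L of degree j with ∫_γ P_j^L(z) W(z) z^ℓ dz = 0_r for ℓ = 0,…,j−1, and an r×r matrix polynomial Q_j^R of degree ≤ j with ∫_γ z^ℓ W(z) Q_j^R(z) dz = δ_{ℓ,j}·I_r for ℓ = 0,…,j. Then the function R(w,z) := ∑_{j=0}^{N−1} Q_j^R(w)·P_j^L(z) is a left reproducing kernel of order N for W on γ, i.e. it is an r×r matrix polynomial of degree ≤ N−1 in each variable and ∫_γ P(w) W(w) R(w,z) dw = P(z) for every r×r matrix polynomial P of degree ≤ N−1 and every z ∈ ℂ. -/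
/-!
Since `P_j` is monic of degree `j`, every matrix polynomial of degree `< N` is a left
combination `∑ D_k P_k`, so it suffices to show biorthogonality `∫ P_k W Q_j = δ_{kj} I`.
For `k ≤ j` expand `P_k` in monomials: only the moment `∫ z^j W Q_j = I` survives, and it
meets the leading coefficient `I` of `P_k` exactly when `k = j`. For `j < k` expand `Q_j` in
monomials instead and use the orthogonality of `P_k` to `z^ℓ`, `ℓ < k`.
-/

/-- An `m × n` matrix polynomial of degree at most `d`:
`P z = ∑_{ℓ=0}^{d} z ^ ℓ • C ℓ` for some constant matrices `C ℓ`. -/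
def IsMatPoly (m n d : ℕ) (P : ℂ → Matrix (Fin m) (Fin n) ℂ) : Prop :=
  ∃ C : ℕ → Matrix (Fin m) (Fin n) ℂ,
    ∀ z : ℂ, P z = ∑ ℓ ∈ Finset.range (d + 1), z ^ ℓ • C ℓ

/-- A monic `r × r` matrix polynomial of degree `d`: the coefficient of `z ^ d` is `I_r`. -/
def IsMonicMatPoly (r d : ℕ) (P : ℂ → Matrix (Fin r) (Fin r) ℂ) : Prop :=
  ∃ C : ℕ → Matrix (Fin r) (Fin r) ℂ, C d = 1 ∧
    ∀ z : ℂ, P z = ∑ ℓ ∈ Finset.range (d + 1), z ^ ℓ • C ℓ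

/-- Entrywise contour integral of a matrix-valued function along `γ : [0,1] → ℂ`. -/
noncomputable def contourIntegralM {m n : ℕ} (γ : ℝ → ℂ) (F : ℂ → Matrix (Fin m) (Fin n) ℂ) :
    Matrix (Fin m) (Fin n) ℂ :=
  Matrix.of fun i j => ∫ t in (0:ℝ)..1, deriv γ t * F (γ t) i j

/-- `R` is a left reproducing kernel of order `N` for the weight `W` on the curve `γ`. -/
def IsLeftReproducingKernel (r N : ℕ) (γ : ℝ → ℂ) (W : ℂ → Matrix (Fin r) (Fin r) ℂ)
    (R : ℂ → ℂ → Matrix (Fin r) (Fin r) ℂ) : Prop :=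
  (∀ z : ℂ, IsMatPoly r r (N - 1) fun w => R w z) ∧
  (∀ w : ℂ, IsMatPoly r r (N - 1) fun z => R w z) ∧
  ∀ P : ℂ → Matrix (Fin r) (Fin r) ℂ, IsMatPoly r r (N - 1) P →
    ∀ z : ℂ, contourIntegralM γ (fun w => P w * W w * R w z) = P z

open MeasureTheory Set Finset

theorem ContinuousOn.matrix_mul {X m n p R : Type*} [TopologicalSpace X] [TopologicalSpace R]
    [Fintype n] [Mul R] [AddCommMonoid R] [ContinuousAdd R] [ContinuousMul R]
    {A : X → Matrix m n R} {B : X → Matrix n p R} {s : Set X} (hA : ContinuousOn A s)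
    (hB : ContinuousOn B s) : ContinuousOn (fun x => A x * B x) s := by
  rw [continuousOn_iff_continuous_domRestrict] at *
  exact hA.matrix_mul hB

section Polynomial

variable {m n p : ℕ}

theorem IsMatPoly.continuous {d : ℕ} {F : ℂ → Matrix (Fin m) (Fin n) ℂ} (hF : IsMatPoly m n d F) :
    Continuous F := by
  obtain ⟨C, hC⟩ := hF
  rw [funext hC]
  fun_prop

theorem IsMonicMatPoly.isMatPoly {r d : ℕ} {F : ℂ → Matrix (Fin r) (Fin r) ℂ}
    (hF : IsMonicMatPoly r d F) : IsMatPoly r r d F :=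
  let ⟨C, _, hC⟩ := hF; ⟨C, hC⟩

theorem isMatPoly_zero (d : ℕ) : IsMatPoly m n d fun _ => 0 :=
  ⟨0, fun z => by simp⟩

theorem IsMatPoly.add {d : ℕ} {F G : ℂ → Matrix (Fin m) (Fin n) ℂ} (hF : IsMatPoly m n d F)
    (hG : IsMatPoly m n d G) : IsMatPoly m n d fun z => F z + G z := by
  obtain ⟨C, hC⟩ := hF
  obtain ⟨C', hC'⟩ := hG
  exact ⟨C + C', fun z => by simp [hC, hC', smul_add, sum_add_distrib]⟩

theorem IsMatPoly.sum {ι : Type*} {d : ℕ} (s : Finset ι) {F : ι → ℂ → Matrix (Fin m) (Fin n) ℂ}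
    (hF : ∀ i ∈ s, IsMatPoly m n d (F i)) : IsMatPoly m n d fun z => ∑ i ∈ s, F i z := by
  classical
  induction s using Finset.induction_on with
  | empty => simpa using isMatPoly_zero d
  | insert i s hi ih =>
    simp_rw [sum_insert hi]
    exact (hF i (mem_insert_self i s)).add (ih fun j hj => hF j (mem_insert_of_mem hj))

theorem IsMatPoly.mono {d e : ℕ} {F : ℂ → Matrix (Fin m) (Fin n) ℂ} (hF : IsMatPoly m n d F)
    (hde : d ≤ e) : IsMatPoly m n e F := by
  obtain ⟨C, hC⟩ := hF
  refine ⟨fun ℓ => if ℓ ≤ d then C ℓ else 0, fun z => ?_⟩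
  dsimp only
  rw [hC, ← sum_subset (range_subset_range.mpr (Nat.succ_le_succ hde))]
  · refine sum_congr rfl fun ℓ hℓ => ?_
    rw [if_pos (Nat.lt_succ_iff.mp (mem_range.mp hℓ))]
  · intro ℓ _ hℓ
    rw [if_neg (by simpa [Nat.lt_succ_iff] using hℓ), smul_zero]

theorem IsMatPoly.const_mul {d : ℕ} {F : ℂ → Matrix (Fin n) (Fin p) ℂ} (hF : IsMatPoly n p d F)
    (D : Matrix (Fin m) (Fin n) ℂ) : IsMatPoly m p d fun z => D * F z := by
  obtain ⟨C, hC⟩ := hF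
  exact ⟨fun ℓ => D * C ℓ, fun z => by simp only [hC, Matrix.mul_sum, Matrix.mul_smul]⟩

theorem IsMatPoly.mul_const {d : ℕ} {F : ℂ → Matrix (Fin m) (Fin n) ℂ} (hF : IsMatPoly m n d F)
    (E : Matrix (Fin n) (Fin p) ℂ) : IsMatPoly m p d fun z => F z * E := by
  obtain ⟨C, hC⟩ := hF
  exact ⟨fun ℓ => C ℓ * E, fun z => by simp only [hC, Matrix.sum_mul, Matrix.smul_mul]⟩

/-- Subtracting `C n * P n` cancels the top coefficient, so induction on the degree applies. -/
theorem exists_sum_range_smul_eq_sum_mul_monic {r n : ℕ} {P : ℕ → ℂ → Matrix (Fin r) (Fin r) ℂ}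
    (hP : ∀ j < n, IsMonicMatPoly r j (P j)) (C : ℕ → Matrix (Fin r) (Fin r) ℂ) :
    ∃ D : ℕ → Matrix (Fin r) (Fin r) ℂ,
      ∀ z, ∑ ℓ ∈ range n, z ^ ℓ • C ℓ = ∑ k ∈ range n, D k * P k z := by
  induction n generalizing C with
  | zero => exact ⟨0, fun z => by simp⟩
  | succ n ih =>
    obtain ⟨A, hAn, hA⟩ := hP n n.lt_succ_self
    obtain ⟨D, hD⟩ := ih (fun j hj => hP j (hj.trans n.lt_succ_self))
      fun ℓ => C ℓ - C n * A ℓ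
    refine ⟨fun k => if k = n then C n else D k, fun z => ?_⟩
    dsimp only
    have hlow : ∑ k ∈ range n, (if k = n then C n else D k) * P k z
        = ∑ k ∈ range n, D k * P k z :=
      sum_congr rfl fun k hk => by rw [if_neg (mem_range.mp hk).ne]
    rw [sum_range_succ, sum_range_succ, hlow, if_pos rfl, ← hD, hA, mul_sum, sum_range_succ,
      hAn, ← add_assoc, ← sum_add_distrib]
    simp only [smul_sub, mul_smul_comm, sub_add_cancel, mul_one]

end Polynomial

section ContourIntegral

variable {γ : ℝ → ℂ} {m n p : ℕ}

theorem intervalIntegrable_deriv_mul_comp (hγ : ContDiffOn ℝ 1 γ (Icc 0 1)) {g : ℂ → ℂ}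
    (hg : ContinuousOn g (γ '' Icc 0 1)) :
    IntervalIntegrable (fun t => deriv γ t * g (γ t)) volume 0 1 := by
  have hcont : ContinuousOn (fun t => derivWithin γ (Icc 0 1) t * g (γ t)) (Icc 0 1) :=
    (hγ.continuousOn_derivWithin (uniqueDiffOn_Icc one_pos) le_rfl).mul
      (hg.comp hγ.continuousOn (mapsTo_image γ _))
  have hint : IntervalIntegrable (fun t => derivWithin γ (Icc 0 1) t * g (γ t)) volume 0 1 :=
    (hcont.mono (Set.uIcc_of_le zero_le_one).subset).intervalIntegrable
  rw [intervalIntegrable_iff_integrableOn_Ioo_of_le zero_le_one] at hint ⊢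
  -- `derivWithin` and `deriv` agree on the interior, which has full measure.
  refine hint.congr_fun (fun t ht => ?_) measurableSet_Ioo
  simp only [derivWithin_of_mem_nhds (Icc_mem_nhds ht.1 ht.2)]

theorem intervalIntegrable_deriv_mul_apply (hγ : ContDiffOn ℝ 1 γ (Icc 0 1))
    {F : ℂ → Matrix (Fin m) (Fin n) ℂ} (hF : ContinuousOn F (γ '' Icc 0 1)) (i : Fin m)
    (j : Fin n) : IntervalIntegrable (fun t => deriv γ t * F (γ t) i j) volume 0 1 :=
  intervalIntegrable_deriv_mul_comp hγ ((continuous_apply_apply i j).comp_continuousOn hF)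

theorem contourIntegralM_sum (hγ : ContDiffOn ℝ 1 γ (Icc 0 1)) {ι : Type*} (s : Finset ι)
    {F : ι → ℂ → Matrix (Fin m) (Fin n) ℂ} (hF : ∀ k ∈ s, ContinuousOn (F k) (γ '' Icc 0 1)) :
    contourIntegralM γ (fun w => ∑ k ∈ s, F k w) = ∑ k ∈ s, contourIntegralM γ (F k) := by
  ext i j
  simp only [contourIntegralM, Matrix.of_apply, Matrix.sum_apply, Finset.mul_sum]
  exact intervalIntegral.integral_finsetSum fun k hk =>
    intervalIntegrable_deriv_mul_apply hγ (hF k hk) i j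

theorem contourIntegralM_const_mul (hγ : ContDiffOn ℝ 1 γ (Icc 0 1))
    (D : Matrix (Fin m) (Fin n) ℂ) {F : ℂ → Matrix (Fin n) (Fin p) ℂ}
    (hF : ContinuousOn F (γ '' Icc 0 1)) :
    contourIntegralM γ (fun w => D * F w) = D * contourIntegralM γ F := by
  ext i j
  simp only [contourIntegralM, Matrix.of_apply, Matrix.mul_apply, Finset.mul_sum,
    mul_left_comm (deriv γ _)]
  rw [intervalIntegral.integral_finsetSum fun k _ =>
    (intervalIntegrable_deriv_mul_apply hγ hF k j).const_mul (D i k)]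
  simp only [intervalIntegral.integral_const_mul]

theorem contourIntegralM_mul_const (hγ : ContDiffOn ℝ 1 γ (Icc 0 1))
    {F : ℂ → Matrix (Fin m) (Fin n) ℂ} (hF : ContinuousOn F (γ '' Icc 0 1))
    (E : Matrix (Fin n) (Fin p) ℂ) :
    contourIntegralM γ (fun w => F w * E) = contourIntegralM γ F * E := by
  ext i j
  simp only [contourIntegralM, Matrix.of_apply, Matrix.mul_apply, Finset.mul_sum, ← mul_assoc]
  rw [intervalIntegral.integral_finsetSum fun k _ =>
    (intervalIntegrable_deriv_mul_apply hγ hF i k).mul_const (E k j)]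
  simp only [intervalIntegral.integral_mul_const]

theorem contourIntegralM_sum_smul_mul (hγ : ContDiffOn ℝ 1 γ (Icc 0 1)) (s : Finset ℕ)
    (C : ℕ → Matrix (Fin m) (Fin n) ℂ) {G : ℂ → Matrix (Fin n) (Fin p) ℂ}
    (hG : ContinuousOn G (γ '' Icc 0 1)) :
    contourIntegralM γ (fun w => (∑ ℓ ∈ s, w ^ ℓ • C ℓ) * G w)
      = ∑ ℓ ∈ s, C ℓ * contourIntegralM γ (fun w => w ^ ℓ • G w) := by
  have hmoment : ∀ ℓ, ContinuousOn (fun w => w ^ ℓ • G w) (γ '' Icc 0 1) :=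
    fun ℓ => (continuousOn_pow ℓ).smul hG
  simp only [Matrix.sum_mul, Matrix.smul_mul, ← Matrix.mul_smul]
  rw [contourIntegralM_sum hγ s fun ℓ _ => continuousOn_const.matrix_mul (hmoment ℓ)]
  exact sum_congr rfl fun ℓ _ => contourIntegralM_const_mul hγ (C ℓ) (hmoment ℓ)

theorem contourIntegralM_mul_sum_smul (hγ : ContDiffOn ℝ 1 γ (Icc 0 1)) (s : Finset ℕ)
    {G : ℂ → Matrix (Fin m) (Fin n) ℂ} (hG : ContinuousOn G (γ '' Icc 0 1))
    (C : ℕ → Matrix (Fin n) (Fin p) ℂ) :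
    contourIntegralM γ (fun w => G w * ∑ ℓ ∈ s, w ^ ℓ • C ℓ)
      = ∑ ℓ ∈ s, contourIntegralM γ (fun w => w ^ ℓ • G w) * C ℓ := by
  have hmoment : ∀ ℓ, ContinuousOn (fun w => w ^ ℓ • G w) (γ '' Icc 0 1) :=
    fun ℓ => (continuousOn_pow ℓ).smul hG
  simp only [Matrix.mul_sum, Matrix.mul_smul, ← Matrix.smul_mul]
  rw [contourIntegralM_sum hγ s fun ℓ _ => (hmoment ℓ).matrix_mul continuousOn_const]
  exact sum_congr rfl fun ℓ _ => contourIntegralM_mul_const hγ (hmoment ℓ) (C ℓ)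

end ContourIntegral

section Biorthogonality

variable {γ : ℝ → ℂ} {r : ℕ} {W : ℂ → Matrix (Fin r) (Fin r) ℂ}

theorem contourIntegralM_monic_mul_mul_eq_ite_of_le (hγ : ContDiffOn ℝ 1 γ (Icc 0 1))
    (hW : ContinuousOn W (γ '' Icc 0 1)) {P Q : ℂ → Matrix (Fin r) (Fin r) ℂ} {k j : ℕ}
    (hkj : k ≤ j) (hP : IsMonicMatPoly r k P) (hQ : IsMatPoly r r j Q)
    (hQorth : ∀ ℓ ≤ j, contourIntegralM γ (fun z => z ^ ℓ • (W z * Q z)) =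
      if ℓ = j then 1 else 0) :
    contourIntegralM γ (fun w => P w * W w * Q w) = if k = j then 1 else 0 := by
  obtain ⟨A, hAk, hA⟩ := hP
  simp only [hA, mul_assoc]
  rw [contourIntegralM_sum_smul_mul hγ _ A (G := fun w => W w * Q w)
    (hW.mul hQ.continuous.continuousOn)]
  rw [sum_congr rfl fun ℓ hℓ => by
    rw [hQorth ℓ ((Nat.lt_succ_iff.mp (mem_range.mp hℓ)).trans hkj)]]
  simp only [mul_ite, mul_one, mul_zero, sum_ite_eq', Finset.mem_range]
  rcases hkj.eq_or_lt with rfl | hlt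
  · simp [hAk]
  · rw [if_neg (by omega), if_neg hlt.ne]

theorem contourIntegralM_mul_mul_eq_zero_of_lt (hγ : ContDiffOn ℝ 1 γ (Icc 0 1))
    (hW : ContinuousOn W (γ '' Icc 0 1)) {P Q : ℂ → Matrix (Fin r) (Fin r) ℂ} {k j : ℕ}
    (hjk : j < k) (hP : IsMatPoly r r k P)
    (hPorth : ∀ ℓ < k, contourIntegralM γ (fun z => z ^ ℓ • (P z * W z)) = 0)
    (hQ : IsMatPoly r r j Q) :
    contourIntegralM γ (fun w => P w * W w * Q w) = 0 := by
  obtain ⟨B, hB⟩ := hQ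
  simp only [hB]
  rw [contourIntegralM_mul_sum_smul hγ _ (G := fun w => P w * W w)
    (hP.continuous.continuousOn.mul hW) B]
  exact sum_eq_zero fun ℓ hℓ => by
    rw [hPorth ℓ ((Nat.lt_succ_iff.mp (mem_range.mp hℓ)).trans_lt hjk), Matrix.zero_mul]

theorem contourIntegralM_monic_mul_mul_eq_ite (hγ : ContDiffOn ℝ 1 γ (Icc 0 1))
    (hW : ContinuousOn W (γ '' Icc 0 1)) {P Q : ℂ → Matrix (Fin r) (Fin r) ℂ} {k j : ℕ}
    (hP : IsMonicMatPoly r k P)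
    (hPorth : ∀ ℓ < k, contourIntegralM γ (fun z => z ^ ℓ • (P z * W z)) = 0)
    (hQ : IsMatPoly r r j Q)
    (hQorth : ∀ ℓ ≤ j, contourIntegralM γ (fun z => z ^ ℓ • (W z * Q z)) =
      if ℓ = j then 1 else 0) :
    contourIntegralM γ (fun w => P w * W w * Q w) = if k = j then 1 else 0 := by
  rcases le_or_gt k j with hkj | hjk
  · exact contourIntegralM_monic_mul_mul_eq_ite_of_le hγ hW hkj hP hQ hQorth
  · rw [if_neg hjk.ne']
    exact contourIntegralM_mul_mul_eq_zero_of_lt hγ hW hjk hP.isMatPoly hPorth hQ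

theorem contourIntegralM_sum_mul_mul_sum_of_biorthogonal (hγ : ContDiffOn ℝ 1 γ (Icc 0 1))
    {ι : Type*} [DecidableEq ι] {s : Finset ι} {P Q : ι → ℂ → Matrix (Fin r) (Fin r) ℂ}
    (hcont : ∀ k ∈ s, ∀ j ∈ s, ContinuousOn (fun w => P k w * W w * Q j w) (γ '' Icc 0 1))
    (hbi : ∀ k ∈ s, ∀ j ∈ s,
      contourIntegralM γ (fun w => P k w * W w * Q j w) = if k = j then 1 else 0)
    (D : ι → Matrix (Fin r) (Fin r) ℂ) (z : ℂ) :
    contourIntegralM γ (fun w => (∑ k ∈ s, D k * P k w) * W w * ∑ j ∈ s, Q j w * P j z)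
      = ∑ k ∈ s, D k * P k z := by
  have hterm : ∀ k ∈ s, ∀ j ∈ s,
      ContinuousOn (fun w => D k * (P k w * W w * Q j w) * P j z) (γ '' Icc 0 1) :=
    fun k hk j hj => (continuousOn_const.mul (hcont k hk j hj)).mul continuousOn_const
  have hexp : (fun w => (∑ k ∈ s, D k * P k w) * W w * ∑ j ∈ s, Q j w * P j z)
      = fun w => ∑ k ∈ s, ∑ j ∈ s, D k * (P k w * W w * Q j w) * P j z := by
    funext w
    rw [Finset.sum_mul, Finset.sum_mul]
    simp only [Finset.mul_sum, mul_assoc]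
  rw [hexp, contourIntegralM_sum hγ s fun k hk => continuousOn_finsetSum s (hterm k hk)]
  refine sum_congr rfl fun k hk => ?_
  rw [contourIntegralM_sum hγ s (hterm k hk)]
  rw [sum_congr rfl fun j hj => by
    rw [contourIntegralM_mul_const hγ (F := fun w => D k * (P k w * W w * Q j w))
        (continuousOn_const.mul (hcont k hk j hj)),
      contourIntegralM_const_mul hγ _ (hcont k hk j hj), hbi k hk j hj]]
  simp [hk]

end Biorthogonality

theorem stmt4_general (r N : ℕ) (hN : 1 ≤ N)
    (γ : ℝ → ℂ) (hγ : ContDiffOn ℝ 1 γ (Set.Icc 0 1))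
    (W : ℂ → Matrix (Fin r) (Fin r) ℂ) (hW : ContinuousOn W (γ '' Set.Icc 0 1))
    (P Q : ℕ → ℂ → Matrix (Fin r) (Fin r) ℂ)
    (hP : ∀ j < N, IsMonicMatPoly r j (P j))
    (hPorth : ∀ j < N, ∀ ℓ < j, contourIntegralM γ (fun z => z ^ ℓ • (P j z * W z)) = 0)
    (hQ : ∀ j < N, IsMatPoly r r j (Q j))
    (hQorth : ∀ j < N, ∀ ℓ ≤ j, contourIntegralM γ (fun z => z ^ ℓ • (W z * Q j z)) =
      if ℓ = j then 1 else 0) :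
    IsLeftReproducingKernel r N γ W
      (fun w z => ∑ j ∈ Finset.range N, Q j w * P j z) := by
  have hdeg : ∀ j ∈ range N, j ≤ N - 1 := fun j hj => Nat.le_sub_one_of_lt (mem_range.mp hj)
  refine ⟨fun z => IsMatPoly.sum _ fun j hj =>
      ((hQ j (mem_range.mp hj)).mono (hdeg j hj)).mul_const (P j z),
    fun w => IsMatPoly.sum _ fun j hj =>
      ((hP j (mem_range.mp hj)).isMatPoly.mono (hdeg j hj)).const_mul (Q j w),
    fun F hF z => ?_⟩
  obtain ⟨C, hC⟩ := hF
  obtain ⟨D, hD⟩ := exists_sum_range_smul_eq_sum_mul_monic hP C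
  obtain rfl : F = fun w => ∑ k ∈ range N, D k * P k w :=
    funext fun w => by rw [hC, Nat.sub_add_cancel hN, hD]
  refine contourIntegralM_sum_mul_mul_sum_of_biorthogonal hγ (fun k hk j hj => ?_)
    (fun k hk j hj => ?_) D z
  · exact ((hP k (mem_range.mp hk)).isMatPoly.continuous.continuousOn.mul hW).mul
      (hQ j (mem_range.mp hj)).continuous.continuousOn
  · exact contourIntegralM_monic_mul_mul_eq_ite hγ hW (hP k (mem_range.mp hk))
      (hPorth k (mem_range.mp hk)) (hQ j (mem_range.mp hj)) (hQorth j (mem_range.mp hj))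

/-- `∑_{j=0}^{N-1} Q_j^R(w) P_j^L(z)` is a left reproducing kernel of
order `N` for `W` on `γ`. -/
theorem stmt4 (r N : ℕ) (hr : 1 ≤ r) (hN : 1 ≤ N)
    (γ : ℝ → ℂ) (hγ : ContDiffOn ℝ 1 γ (Set.Icc 0 1))
    (W : ℂ → Matrix (Fin r) (Fin r) ℂ) (hW : ContinuousOn W (γ '' Set.Icc 0 1))
    (P Q : ℕ → ℂ → Matrix (Fin r) (Fin r) ℂ)
    (hP : ∀ j < N, IsMonicMatPoly r j (P j))
    (hPorth : ∀ j < N, ∀ ℓ < j, contourIntegralM γ (fun z => z ^ ℓ • (P j z * W z)) = 0)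
    (hQ : ∀ j < N, IsMatPoly r r j (Q j))
    (hQorth : ∀ j < N, ∀ ℓ ≤ j, contourIntegralM γ (fun z => z ^ ℓ • (W z * Q j z)) =
      if ℓ = j then 1 else 0) :
    IsLeftReproducingKernel r N γ W
      (fun w z => ∑ j ∈ Finset.range N, Q j w * P j z) :=
  stmt4_general r N hN γ hγ W hW P Q hP hPorth hQ hQorth
end

section
/- (Christoffel–Darboux formula) Let r, N ≥ 1, let γ : [0,1] → ℂ be a continuously differentiable curve, and let W : ℂ → M_r(ℂ) be continuous on the image of γ. Suppose there exist: a monic r×r matrix polynomial P_N^L of degree N with ∫_γ P_N^L(z) W(z) z^ℓ dz = 0_r for ℓ = 0,…,N−1; a monic r×r matrix polynomial P_N^R of degree N with ∫_γ z^ℓ W(z) P_N^R(z) dz = 0_r for ℓ = 0,…,N−1; an r×r matrix polynomial Q_{N−1}^L of degree ≤ N−1 with ∫_γ Q_{N−1}^L(z) W(z) z^ℓ dz = δ_{ℓ,N−1}·I_r for ℓ = 0,…,N−1; and an r×r matrix polynomial Q_{N−1}^R of degree ≤ N−1 with ∫_γ z^ℓ W(z) Q_{N−1}^R(z) dz = δ_{ℓ,N−1}·I_r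 for ℓ = 0,…,N−1. Then there exists a function R : ℂ×ℂ → M_r(ℂ), which is an r×r matrix polynomial of degree ≤ N−1 in each variable separately, such that (z−w)·R(w,z) = Q_{N−1}^R(w)·P_N^L(z) − P_N^R(w)·Q_{N−1}^L(z) for all w, z ∈ ℂ, and R is both a left and a right reproducing kernel of order N for W on γ. -/
/-- `R` is a right reproducing kernel of order `N` for the weight `W` on the curve `γ`. -/
def IsRightReproducingKernel (r N : ℕ) (γ : ℝ → ℂ) (W : ℂ → Matrix (Fin r) (Fin r) ℂ)
    (R : ℂ → ℂ → Matrix (Fin r) (Fin r) ℂ) : Prop :=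
  (∀ z : ℂ, IsMatPoly r r (N - 1) fun w => R w z) ∧
  (∀ w : ℂ, IsMatPoly r r (N - 1) fun z => R w z) ∧
  ∀ P : ℂ → Matrix (Fin r) (Fin r) ℂ, IsMatPoly r r (N - 1) P →
    ∀ w : ℂ, contourIntegralM γ (fun z => R w z * W z * P z) = P w



open MeasureTheory Finset

lemma integrable_aux {r : ℕ} {γ : ℝ → ℂ} (hγ : ContDiffOn ℝ 1 γ (Set.Icc 0 1))
    {W : ℂ → Matrix (Fin r) (Fin r) ℂ} (hW : ContinuousOn W (γ '' Set.Icc 0 1))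
    (k : ℕ) (a b : Fin r) :
    IntervalIntegrable (fun t => deriv γ t * ((γ t) ^ k * W (γ t) a b)) volume 0 1 := by
  set g := derivWithin γ (Set.Icc 0 1) with hg
  have hgc : ContinuousOn g (Set.Icc 0 1) :=
    hγ.continuousOn_derivWithin (uniqueDiffOn_Icc (by norm_num)) le_rfl
  have hWc : ContinuousOn (fun t => W (γ t) a b) (Set.Icc 0 1) := by
    have h1 : ContinuousOn (fun t => W (γ t)) (Set.Icc 0 1) :=
      hW.comp hγ.continuousOn (Set.mapsTo_image γ _)
    exact ((continuous_apply b).comp (continuous_apply a)).comp_continuousOn h1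
  have hcont : ContinuousOn (fun t => g t * ((γ t) ^ k * W (γ t) a b)) (Set.Icc 0 1) :=
    hgc.mul ((hγ.continuousOn.pow k).mul hWc)
  have hii : IntervalIntegrable (fun t => g t * ((γ t) ^ k * W (γ t) a b)) volume 0 1 :=
    ContinuousOn.intervalIntegrable (by rwa [Set.uIcc_of_le (by norm_num : (0:ℝ) ≤ 1)])
  rw [intervalIntegrable_iff] at hii ⊢
  rw [Set.uIoc_of_le (by norm_num : (0:ℝ) ≤ 1)] at hii ⊢
  rw [integrableOn_Ioc_iff_integrableOn_Ioo] at hii ⊢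
  refine hii.congr_fun (fun t ht => ?_) measurableSet_Ioo
  have : deriv γ t = g t := (derivWithin_of_mem_nhds (Icc_mem_nhds ht.1 ht.2)).symm
  simp [this]

lemma my_ii_sum {ι : Type*} (s : Finset ι) {f : ι → ℝ → ℂ}
    (h : ∀ i ∈ s, IntervalIntegrable (f i) MeasureTheory.volume 0 1) :
    IntervalIntegrable (fun t => ∑ i ∈ s, f i t) MeasureTheory.volume 0 1 := by
  classical
  induction s using Finset.induction with
  | empty => simp
  | @insert a s ha ih =>
      simp only [Finset.sum_insert ha]
      exact (h a (Finset.mem_insert_self a s)).add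
        (ih fun i hi => h i (Finset.mem_insert_of_mem hi))

section Master
set_option maxHeartbeats 2000000

variable {r : ℕ} {γ : ℝ → ℂ} {W : ℂ → Matrix (Fin r) (Fin r) ℂ}

lemma integrand_expand (k : ℕ) (A B : Matrix (Fin r) (Fin r) ℂ) (i j : Fin r) (t : ℝ) :
    deriv γ t * ((γ t) ^ k • (A * W (γ t) * B)) i j
      = ∑ c : Fin r, ∑ d : Fin r,
          (A i d * B c j) * (deriv γ t * ((γ t) ^ k * W (γ t) d c)) := by
  simp only [Matrix.smul_apply, Matrix.mul_apply, smul_eq_mul, Finset.mul_sum, Finset.sum_mul]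
  refine Finset.sum_congr rfl fun c _ => Finset.sum_congr rfl fun d _ => ?_
  ring

lemma good_single (hγ : ContDiffOn ℝ 1 γ (Set.Icc 0 1))
    (hW : ContinuousOn W (γ '' Set.Icc 0 1)) (k : ℕ) (A B : Matrix (Fin r) (Fin r) ℂ)
    (i j : Fin r) :
    IntervalIntegrable (fun t => deriv γ t * ((γ t) ^ k • (A * W (γ t) * B)) i j)
      volume 0 1 := by
  have h : (fun t => deriv γ t * ((γ t) ^ k • (A * W (γ t) * B)) i j)
      = fun t => ∑ c : Fin r, ∑ d : Fin r,
          (A i d * B c j) * (deriv γ t * ((γ t) ^ k * W (γ t) d c)) :=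
    funext fun t => integrand_expand k A B i j t
  rw [h]
  refine my_ii_sum _ fun c _ => my_ii_sum _ fun d _ => ?_
  exact (integrable_aux hγ hW k d c).const_mul _

lemma single_master (hγ : ContDiffOn ℝ 1 γ (Set.Icc 0 1))
    (hW : ContinuousOn W (γ '' Set.Icc 0 1)) (k : ℕ) (A B : Matrix (Fin r) (Fin r) ℂ) :
    contourIntegralM γ (fun z => z ^ k • (A * W z * B))
      = A * contourIntegralM γ (fun z => z ^ k • W z) * B := by
  ext i j
  have h2 : (contourIntegralM γ (fun z => z ^ k • (A * W z * B))) i j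
      = ∑ c : Fin r, ∑ d : Fin r,
          (A i d * B c j) * ∫ t in (0:ℝ)..1, deriv γ t * ((γ t) ^ k * W (γ t) d c) := by
    show (∫ t in (0:ℝ)..1, deriv γ t * ((γ t) ^ k • (A * W (γ t) * B)) i j) = _
    rw [intervalIntegral.integral_congr
      (g := fun t => ∑ c : Fin r, ∑ d : Fin r,
        (A i d * B c j) * (deriv γ t * ((γ t) ^ k * W (γ t) d c)))
      (fun t _ => integrand_expand k A B i j t)]
    rw [intervalIntegral.integral_finset_sum
      (fun c _ => my_ii_sum _ fun d _ => (integrable_aux hγ hW k d c).const_mul _)]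
    refine Finset.sum_congr rfl fun c _ => ?_
    rw [intervalIntegral.integral_finset_sum
      (fun d _ => (integrable_aux hγ hW k d c).const_mul _)]
    exact Finset.sum_congr rfl fun d _ => intervalIntegral.integral_const_mul _ _
  rw [h2]
  simp only [Matrix.mul_apply, contourIntegralM, Matrix.of_apply, Matrix.smul_apply,
    smul_eq_mul, Finset.sum_mul, Finset.mul_sum]
  refine Finset.sum_congr rfl fun c _ => Finset.sum_congr rfl fun d _ => ?_
  ring

lemma master (hγ : ContDiffOn ℝ 1 γ (Set.Icc 0 1))
    (hW : ContinuousOn W (γ '' Set.Icc 0 1))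
    {ι : Type} (s : Finset ι) (e : ι → ℕ) (A B : ι → Matrix (Fin r) (Fin r) ℂ) :
    contourIntegralM γ (fun z => ∑ k ∈ s, z ^ e k • (A k * W z * B k))
      = ∑ k ∈ s, A k * contourIntegralM γ (fun z => z ^ e k • W z) * B k := by
  ext i j
  show (∫ t in (0:ℝ)..1, deriv γ t * (∑ k ∈ s, (γ t) ^ e k • (A k * W (γ t) * B k)) i j) = _
  rw [intervalIntegral.integral_congr
    (g := fun t => ∑ k ∈ s, deriv γ t * ((γ t) ^ e k • (A k * W (γ t) * B k)) i j)
    (fun t _ => by rw [Matrix.sum_apply, Finset.mul_sum])]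
  rw [intervalIntegral.integral_finset_sum
    (fun k _ => good_single hγ hW (e k) (A k) (B k) i j), Matrix.sum_apply]
  refine Finset.sum_congr rfl fun k _ => ?_
  have hs := single_master hγ hW (e k) (A k) (B k)
  calc (∫ t in (0:ℝ)..1, deriv γ t * ((γ t) ^ e k • (A k * W (γ t) * B k)) i j)
      = contourIntegralM γ (fun z => z ^ e k • (A k * W z * B k)) i j := rfl
    _ = (A k * contourIntegralM γ (fun z => z ^ e k • W z) * B k) i j := by rw [hs]

end Master


lemma swap_assoc_sum {r : ℕ} {ι κ : Type*} (s : Finset ι) (t : Finset κ)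
    (f : ι → Matrix (Fin r) (Fin r) ℂ) (g : ι → κ → Matrix (Fin r) (Fin r) ℂ)
    (h : κ → Matrix (Fin r) (Fin r) ℂ) :
    ∑ i ∈ s, f i * (∑ j ∈ t, g i j * h j) = ∑ j ∈ t, (∑ i ∈ s, f i * g i j) * h j := by
  simp only [Finset.mul_sum, Finset.sum_mul, mul_assoc]
  exact Finset.sum_comm

lemma lnull {r N : ℕ} (hN : 1 ≤ N) (mm B D : ℕ → Matrix (Fin r) (Fin r) ℂ)
    (hB : ∀ ℓ < N, ∑ i ∈ Finset.range (N+1), mm (ℓ+i) * B i = 0) (hBN : B N = 1)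
    (hD : ∀ ℓ < N, ∑ i ∈ Finset.range N, mm (ℓ+i) * D i
      = (if ℓ = N-1 then (1:Matrix (Fin r) (Fin r) ℂ) else 0)) :
    ∀ n : ℕ → Matrix (Fin r) (Fin r) ℂ,
      (∀ ℓ < N, ∑ i ∈ Finset.range N, n i * mm (i+ℓ) = 0) → ∀ i < N, n i = 0 := by
  have top : ∀ n : ℕ → Matrix (Fin r) (Fin r) ℂ,
      (∀ ℓ < N, ∑ i ∈ Finset.range N, n i * mm (i+ℓ) = 0) → n (N-1) = 0 := by
    intro n hn
    have h0 : ∑ ℓ ∈ range N, (∑ i ∈ range N, n i * mm (i+ℓ)) * D ℓ = 0 :=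
      Finset.sum_eq_zero fun ℓ hℓ => by rw [hn ℓ (mem_range.mp hℓ), zero_mul]
    rw [← swap_assoc_sum] at h0
    have h1 : ∑ i ∈ range N, n i * (∑ ℓ ∈ range N, mm (i+ℓ) * D ℓ)
        = ∑ i ∈ range N, (if i = N-1 then n i else 0) := by
      refine Finset.sum_congr rfl fun i hi => ?_
      rw [hD i (mem_range.mp hi)]
      split <;> simp
    rw [h1, Finset.sum_ite_eq' (range N) (N-1) n] at h0
    simpa [Finset.mem_range, Nat.sub_lt hN] using h0
  have main : ∀ k, ∀ n : ℕ → Matrix (Fin r) (Fin r) ℂ,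
      (∀ ℓ < N, ∑ i ∈ Finset.range N, n i * mm (i+ℓ) = 0) →
      ∀ i, i < N → N ≤ i + 1 + k → n i = 0 := by
    intro k
    induction k with
    | zero =>
        intro n hn i hi hik
        have : i = N - 1 := by omega
        subst this; exact top n hn
    | succ k ih =>
        intro n hn i hi hik
        have hNm1 : n (N-1) = 0 := top n hn
        by_cases hc : i = N - 1
        · subst hc; exact hNm1
        have hi1 : i + 1 < N := by omega
        set n' : ℕ → Matrix (Fin r) (Fin r) ℂ
          := fun j => if j = 0 then 0 else n (j-1) with hn'
        have hnull' : ∀ ℓ < N, ∑ j ∈ Finset.range N, n' j * mm (j+ℓ) = 0 := by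
          intro ℓ hℓ
          obtain ⟨M, rfl⟩ : ∃ M, N = M + 1 := ⟨N-1, by omega⟩
          rw [Finset.sum_range_succ']
          have e1 : ∑ j ∈ range M, n' (j+1) * mm (j+1+ℓ)
              = ∑ j ∈ range M, n j * mm (j+(ℓ+1)) := by
            refine Finset.sum_congr rfl fun j _ => ?_
            simp only [hn', Nat.add_sub_cancel, if_neg (Nat.succ_ne_zero j)]
            rw [show j + 1 + ℓ = j + (ℓ+1) by omega]
          rw [e1]
          simp only [hn', if_pos rfl, zero_mul, add_zero]
          by_cases hℓ1 : ℓ + 1 < M + 1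
          · have := hn (ℓ+1) hℓ1
            rw [Finset.sum_range_succ] at this
            have hM : n M = 0 := by
              have : M = M + 1 - 1 := by omega
              rw [this]; exact hNm1
            rw [hM, zero_mul, add_zero] at this
            exact this
          · rw [show ℓ + 1 = M + 1 from by omega]
            have hM : n M = 0 := by
              have h' : M = M + 1 - 1 := by omega
              rw [h']; exact hNm1
            have e2 : ∑ j ∈ range M, n j * mm (j+(M+1))
                = ∑ j ∈ range (M+1), n j * mm (j+(M+1)) := by
              rw [Finset.sum_range_succ, hM, zero_mul, add_zero]
            rw [e2]
            have e3 : ∀ j < M+1, mm (j+(M+1)) = -∑ p ∈ range (M+1), mm (j+p) * B p := by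
              intro j hj
              have := hB j hj
              rw [Finset.sum_range_succ, hBN, mul_one] at this
              linear_combination (norm := abel) this
            have e4 : ∑ j ∈ range (M+1), n j * mm (j+(M+1))
                = -∑ j ∈ range (M+1), n j * (∑ p ∈ range (M+1), mm (j+p) * B p) := by
              rw [← Finset.sum_neg_distrib]
              refine Finset.sum_congr rfl fun j hj => ?_
              rw [e3 j (mem_range.mp hj), mul_neg]
            rw [e4, swap_assoc_sum]
            rw [Finset.sum_eq_zero, neg_zero]
            intro p hp
            rw [hn p (mem_range.mp hp), zero_mul]
        have := ih n' hnull' (i+1) hi1 (by omega)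
        simpa [hn'] using this
  intro n hn i hi
  exact main N n hn i hi (by omega)


lemma exists_Kf {r N : ℕ} (hr : 1 ≤ r) (hN : 1 ≤ N)
    (mm B D : ℕ → Matrix (Fin r) (Fin r) ℂ)
    (rel2 : ∀ ℓ < N, ∑ i ∈ Finset.range (N+1), mm (ℓ+i) * B i = 0) (hBN : B N = 1)
    (rel4 : ∀ ℓ < N, ∑ i ∈ Finset.range N, mm (ℓ+i) * D i
      = (if ℓ = N-1 then (1:Matrix (Fin r) (Fin r) ℂ) else 0)) :
    ∃ Kf : ℕ → ℕ → Matrix (Fin r) (Fin r) ℂ,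
      (∀ i < N, ∀ j < N, ∑ p ∈ Finset.range N, mm (i+p) * Kf p j
        = if i = j then 1 else 0) ∧
      (∀ i < N, ∀ j < N, ∑ p ∈ Finset.range N, Kf i p * mm (p+j)
        = if i = j then 1 else 0) ∧
      (∀ i j, ¬(i < N ∧ j < N) → Kf i j = 0) := by
  classical
  set Hm : Matrix (Fin N × Fin r) (Fin N × Fin r) ℂ :=
    Matrix.of (fun p q => mm (p.1.1 + q.1.1) p.2 q.2) with hHm
  have hdet : IsUnit Hm.det := by
    rw [isUnit_iff_ne_zero]
    intro h0
    obtain ⟨v, hv0, hvH⟩ := Matrix.exists_vecMul_eq_zero_iff.mpr h0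
    set n0 : ℕ → Matrix (Fin r) (Fin r) ℂ :=
      fun i => Matrix.of fun a b => if h : i < N then v (⟨i,h⟩, b) else 0 with hn0
    have hnul : ∀ ℓ < N, ∑ i ∈ range N, n0 i * mm (i+ℓ) = 0 := by
      intro ℓ hℓ
      ext a b
      have hcoord := congrFun hvH (⟨ℓ,hℓ⟩, b)
      rw [Matrix.vecMul, dotProduct] at hcoord
      rw [Fintype.sum_prod_type] at hcoord
      simp only [Pi.zero_apply] at hcoord
      rw [Matrix.sum_apply, Matrix.zero_apply]
      rw [← Fin.sum_univ_eq_sum_range (fun i => (n0 i * mm (i+ℓ)) a b) N]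
      rw [← hcoord]
      refine Finset.sum_congr rfl fun p _ => ?_
      rw [Matrix.mul_apply]
      refine Finset.sum_congr rfl fun c _ => ?_
      simp only [hn0, hHm, Matrix.of_apply, dif_pos p.2]
    have hz := lnull hN mm B D rel2 hBN rel4 n0 hnul
    apply hv0
    funext p
    obtain ⟨⟨i,hi⟩, c⟩ := p
    have h1 := congrFun (congrFun (hz i hi) ⟨0, hr⟩) c
    simpa [hn0, dif_pos hi] using h1
  have hHKm : Hm * Hm⁻¹ = 1 := Matrix.mul_nonsing_inv Hm hdet
  have hKHm : Hm⁻¹ * Hm = 1 := Matrix.nonsing_inv_mul Hm hdet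
  set Km := Hm⁻¹ with hKm
  refine ⟨fun i j => Matrix.of (fun a b =>
    if h : i < N ∧ j < N then Km (⟨i,h.1⟩,a) (⟨j,h.2⟩,b) else 0), ?_, ?_, ?_⟩
  · intro i hi j hj
    ext a b
    have h1 := congrFun (congrFun hHKm (⟨i,hi⟩,a)) (⟨j,hj⟩,b)
    rw [Matrix.mul_apply, Fintype.sum_prod_type] at h1
    rw [Matrix.sum_apply]
    rw [← Fin.sum_univ_eq_sum_range (fun p =>
      (mm (i+p) * Matrix.of (fun a b =>
        if h : p < N ∧ j < N then Km (⟨p,h.1⟩,a) (⟨j,h.2⟩,b) else 0)) a b) N]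
    rw [show ((1:Matrix (Fin N × Fin r) (Fin N × Fin r) ℂ) (⟨i,hi⟩,a) (⟨j,hj⟩,b))
      = ((if i = j then (1:Matrix (Fin r) (Fin r) ℂ) else 0) a b) from ?_] at h1
    · rw [← h1]
      refine Finset.sum_congr rfl fun p _ => ?_
      rw [Matrix.mul_apply]
      refine Finset.sum_congr rfl fun c _ => ?_
      simp only [Matrix.of_apply, hHm, dif_pos (And.intro p.2 hj)]
    · by_cases hij : i = j
      · subst hij
        simp [Matrix.one_apply, Prod.ext_iff, Fin.ext_iff]
      · have : ((⟨i,hi⟩ : Fin N), a) ≠ ((⟨j,hj⟩ : Fin N), b) := by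
          simp [Prod.ext_iff, Fin.ext_iff]; intro h; omega
        simp [Matrix.one_apply_ne this, if_neg hij]
  · intro i hi j hj
    ext a b
    have h1 := congrFun (congrFun hKHm (⟨i,hi⟩,a)) (⟨j,hj⟩,b)
    rw [Matrix.mul_apply, Fintype.sum_prod_type] at h1
    rw [Matrix.sum_apply]
    rw [← Fin.sum_univ_eq_sum_range (fun p =>
      (Matrix.of (fun a b =>
        if h : i < N ∧ p < N then Km (⟨i,h.1⟩,a) (⟨p,h.2⟩,b) else 0) * mm (p+j)) a b) N]
    rw [show ((1:Matrix (Fin N × Fin r) (Fin N × Fin r) ℂ) (⟨i,hi⟩,a) (⟨j,hj⟩,b))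
      = ((if i = j then (1:Matrix (Fin r) (Fin r) ℂ) else 0) a b) from ?_] at h1
    · rw [← h1]
      refine Finset.sum_congr rfl fun p _ => ?_
      rw [Matrix.mul_apply]
      refine Finset.sum_congr rfl fun c _ => ?_
      simp only [Matrix.of_apply, hHm, dif_pos (And.intro hi p.2)]
    · by_cases hij : i = j
      · subst hij
        simp [Matrix.one_apply, Prod.ext_iff, Fin.ext_iff]
      · have : ((⟨i,hi⟩ : Fin N), a) ≠ ((⟨j,hj⟩ : Fin N), b) := by
          simp [Prod.ext_iff, Fin.ext_iff]; intro h; omega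
        simp [Matrix.one_apply_ne this, if_neg hij]
  · intro i j hij
    ext a b
    simp [dif_neg hij]


section
variable {r N : ℕ}

lemma swap_assoc_sum' {r : ℕ} {ι κ : Type*} (s : Finset ι) (t : Finset κ)
    (f : ι → Matrix (Fin r) (Fin r) ℂ) (g : ι → κ → Matrix (Fin r) (Fin r) ℂ)
    (h : κ → Matrix (Fin r) (Fin r) ℂ) :
    ∑ i ∈ s, f i * (∑ j ∈ t, g i j * h j) = ∑ j ∈ t, (∑ i ∈ s, f i * g i j) * h j := by
  simp only [Finset.mul_sum, Finset.sum_mul, mul_assoc]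
  exact Finset.sum_comm

lemma hE_lemma (hN : 1 ≤ N)
    (mm A B C D : ℕ → Matrix (Fin r) (Fin r) ℂ)
    (Kf : ℕ → ℕ → Matrix (Fin r) (Fin r) ℂ)
    (hAN : A N = 1) (hBN : B N = 1)
    (rel1 : ∀ ℓ < N, ∑ p ∈ Finset.range (N+1), A p * mm (p+ℓ) = 0)
    (rel2 : ∀ ℓ < N, ∑ p ∈ Finset.range (N+1), mm (ℓ+p) * B p = 0)
    (rel3 : ∀ ℓ < N, ∑ p ∈ Finset.range N, C p * mm (p+ℓ)
      = (if ℓ = N-1 then (1:Matrix (Fin r) (Fin r) ℂ) else 0))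
    (rel4 : ∀ ℓ < N, ∑ p ∈ Finset.range N, mm (ℓ+p) * D p
      = (if ℓ = N-1 then (1:Matrix (Fin r) (Fin r) ℂ) else 0))
    (hHKb : ∀ i < N, ∀ j < N, ∑ p ∈ Finset.range N, mm (i+p) * Kf p j
      = if i = j then 1 else 0)
    (hKHb : ∀ i < N, ∀ j < N, ∑ p ∈ Finset.range N, Kf i p * mm (p+j)
      = if i = j then 1 else 0)
    (hKf0 : ∀ i j, ¬(i < N ∧ j < N) → Kf i j = 0) :
    ∀ i < N+1, ∀ j < N+1,
      ((if 1 ≤ j then Kf i (j-1) else 0) - (if 1 ≤ i then Kf (i-1) j else 0))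
        = (if i < N then D i else 0) * A j - B i * (if j < N then C j else 0) := by
  -- derived coefficient formulas
  have hCK : ∀ j < N, C j = Kf (N-1) j := by
    intro j hj
    have step1 : ∑ ℓ ∈ range N, (∑ p ∈ range N, C p * mm (p+ℓ)) * Kf ℓ j
        = Kf (N-1) j := by
      calc ∑ ℓ ∈ range N, (∑ p ∈ range N, C p * mm (p+ℓ)) * Kf ℓ j
          = ∑ ℓ ∈ range N, (if ℓ = N-1 then Kf ℓ j else 0) := by
            refine Finset.sum_congr rfl fun ℓ hℓ => ?_
            rw [rel3 ℓ (mem_range.mp hℓ)]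
            split <;> simp
        _ = Kf (N-1) j := by
            rw [Finset.sum_ite_eq' (range N) (N-1) (fun ℓ => Kf ℓ j)]
            rw [if_pos (by simp [mem_range]; omega)]
    rw [← swap_assoc_sum'] at step1
    rw [← step1]
    symm
    calc ∑ p ∈ range N, C p * (∑ ℓ ∈ range N, mm (p+ℓ) * Kf ℓ j)
        = ∑ p ∈ range N, (if p = j then C p else 0) := by
          refine Finset.sum_congr rfl fun p hp => ?_
          rw [hHKb p (mem_range.mp hp) j hj]
          split <;> simp
      _ = C j := by
          rw [Finset.sum_ite_eq' (range N) j C, if_pos (mem_range.mpr hj)]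
  have hDK : ∀ i < N, D i = Kf i (N-1) := by
    intro i hi
    have step1 : ∑ ℓ ∈ range N, Kf i ℓ * (∑ p ∈ range N, mm (ℓ+p) * D p)
        = Kf i (N-1) := by
      calc ∑ ℓ ∈ range N, Kf i ℓ * (∑ p ∈ range N, mm (ℓ+p) * D p)
          = ∑ ℓ ∈ range N, (if ℓ = N-1 then Kf i ℓ else 0) := by
            refine Finset.sum_congr rfl fun ℓ hℓ => ?_
            rw [rel4 ℓ (mem_range.mp hℓ)]
            split <;> simp
        _ = Kf i (N-1) := by
            rw [Finset.sum_ite_eq' (range N) (N-1) (fun ℓ => Kf i ℓ)]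
            rw [if_pos (by simp [mem_range]; omega)]
    rw [swap_assoc_sum'] at step1
    rw [← step1]
    symm
    calc ∑ p ∈ range N, (∑ ℓ ∈ range N, Kf i ℓ * mm (ℓ+p)) * D p
        = ∑ p ∈ range N, (if p = i then D p else 0) := by
          refine Finset.sum_congr rfl fun p hp => ?_
          rw [hKHb i hi p (mem_range.mp hp)]
          by_cases h : i = p
          · subst h; simp
          · rw [if_neg h, if_neg (fun hh => h hh.symm), zero_mul]
      _ = D i := by
          rw [Finset.sum_ite_eq' (range N) i D, if_pos (mem_range.mpr hi)]
  have rel1' : ∀ ℓ < N, ∑ p ∈ range N, A p * mm (p+ℓ) = -mm (N+ℓ) := by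
    intro ℓ hℓ
    have h := rel1 ℓ hℓ
    rw [Finset.sum_range_succ, hAN, one_mul] at h
    exact eq_neg_of_add_eq_zero_left h
  have rel2' : ∀ ℓ < N, ∑ p ∈ range N, mm (ℓ+p) * B p = -mm (ℓ+N) := by
    intro ℓ hℓ
    have h := rel2 ℓ hℓ
    rw [Finset.sum_range_succ, hBN, mul_one] at h
    exact eq_neg_of_add_eq_zero_left h
  have hAK : ∀ j < N, A j = -∑ ℓ ∈ range N, mm (N+ℓ) * Kf ℓ j := by
    intro j hj
    have step1 : ∑ ℓ ∈ range N, (∑ p ∈ range N, A p * mm (p+ℓ)) * Kf ℓ j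
        = -∑ ℓ ∈ range N, mm (N+ℓ) * Kf ℓ j := by
      rw [← Finset.sum_neg_distrib]
      refine Finset.sum_congr rfl fun ℓ hℓ => ?_
      rw [rel1' ℓ (mem_range.mp hℓ), neg_mul]
    rw [← swap_assoc_sum'] at step1
    rw [← step1]
    symm
    calc ∑ p ∈ range N, A p * (∑ ℓ ∈ range N, mm (p+ℓ) * Kf ℓ j)
        = ∑ p ∈ range N, (if p = j then A p else 0) := by
          refine Finset.sum_congr rfl fun p hp => ?_
          rw [hHKb p (mem_range.mp hp) j hj]
          split <;> simp
      _ = A j := by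
          rw [Finset.sum_ite_eq' (range N) j A, if_pos (mem_range.mpr hj)]
  have hBK : ∀ i < N, B i = -∑ ℓ ∈ range N, Kf i ℓ * mm (ℓ+N) := by
    intro i hi
    have step1 : ∑ ℓ ∈ range N, Kf i ℓ * (∑ p ∈ range N, mm (ℓ+p) * B p)
        = -∑ ℓ ∈ range N, Kf i ℓ * mm (ℓ+N) := by
      rw [← Finset.sum_neg_distrib]
      refine Finset.sum_congr rfl fun ℓ hℓ => ?_
      rw [rel2' ℓ (mem_range.mp hℓ), mul_neg]
    rw [swap_assoc_sum'] at step1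
    rw [← step1]
    symm
    calc ∑ p ∈ range N, (∑ ℓ ∈ range N, Kf i ℓ * mm (ℓ+p)) * B p
        = ∑ p ∈ range N, (if p = i then B p else 0) := by
          refine Finset.sum_congr rfl fun p hp => ?_
          rw [hKHb i hi p (mem_range.mp hp)]
          by_cases h : i = p
          · subst h; simp
          · rw [if_neg h, if_neg (fun hh => h hh.symm), zero_mul]
      _ = B i := by
          rw [Finset.sum_ite_eq' (range N) i B, if_pos (mem_range.mpr hi)]
  -- displacement identity
  have hdisp : ∀ i < N, ∀ j < N,
      ((if 1 ≤ j then Kf i (j-1) else 0) - (if 1 ≤ i then Kf (i-1) j else 0))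
        = D i * A j - B i * C j := by
    intro i hi j hj
    obtain ⟨M, rfl⟩ : ∃ M, N = M+1 := ⟨N-1, by omega⟩
    have way1 : ∑ ℓ ∈ range (M+1), Kf i ℓ * (∑ p ∈ range (M+1), mm (ℓ+p+1) * Kf p j)
        = (if 1 ≤ j then Kf i (j-1) else 0) - Kf i M * A j := by
      rw [Finset.sum_range_succ]
      have hlast : ∑ p ∈ range (M+1), mm (M+p+1) * Kf p j = -A j := by
        rw [hAK j hj, neg_neg]
        refine Finset.sum_congr rfl fun p _ => ?_
        rw [show M+p+1 = (M+1)+p by omega]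
      rw [hlast, mul_neg]
      have hmain : ∑ ℓ ∈ range M, Kf i ℓ * (∑ p ∈ range (M+1), mm (ℓ+p+1) * Kf p j)
          = if 1 ≤ j then Kf i (j-1) else 0 := by
        have hper : ∀ ℓ < M, ∑ p ∈ range (M+1), mm (ℓ+p+1) * Kf p j
            = if ℓ+1 = j then 1 else 0 := by
          intro ℓ hℓ
          rw [← hHKb (ℓ+1) (by omega) j hj]
          refine Finset.sum_congr rfl fun p _ => ?_
          rw [show ℓ+p+1 = (ℓ+1)+p by omega]
        have h1 : ∑ ℓ ∈ range M, Kf i ℓ * (∑ p ∈ range (M+1), mm (ℓ+p+1) * Kf p j)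
            = ∑ ℓ ∈ range M, (if ℓ+1 = j then Kf i ℓ else 0) := by
          refine Finset.sum_congr rfl fun ℓ hℓ => ?_
          rw [hper ℓ (mem_range.mp hℓ)]
          split <;> simp
        rw [h1]
        by_cases hj1 : 1 ≤ j
        · rw [if_pos hj1]
          rw [Finset.sum_eq_single_of_mem (j-1) (by simp [mem_range]; omega)]
          · rw [if_pos (by omega)]
          · intro ℓ hℓ hne
            rw [if_neg (by omega)]
        · rw [if_neg hj1]
          exact Finset.sum_eq_zero fun ℓ _ => by rw [if_neg (by omega)]
      rw [hmain, ← sub_eq_add_neg]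
    have hX : ∑ ℓ ∈ range (M+1), Kf i ℓ * (∑ p ∈ range (M+1), mm (ℓ+p+1) * Kf p j)
        = ∑ p ∈ range (M+1), (∑ ℓ ∈ range (M+1), Kf i ℓ * mm (ℓ+p+1)) * Kf p j :=
      swap_assoc_sum' _ _ _ _ _
    have way2 : ∑ p ∈ range (M+1), (∑ ℓ ∈ range (M+1), Kf i ℓ * mm (ℓ+p+1)) * Kf p j
        = (if 1 ≤ i then Kf (i-1) j else 0) - B i * Kf M j := by
      rw [Finset.sum_range_succ]
      have hlast : ∑ ℓ ∈ range (M+1), Kf i ℓ * mm (ℓ+M+1) = -B i := by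
        rw [hBK i hi, neg_neg]
        refine Finset.sum_congr rfl fun ℓ _ => ?_
        rw [show ℓ+M+1 = ℓ+(M+1) by omega]
      rw [hlast, neg_mul]
      have hmain : ∑ p ∈ range M, (∑ ℓ ∈ range (M+1), Kf i ℓ * mm (ℓ+p+1)) * Kf p j
          = if 1 ≤ i then Kf (i-1) j else 0 := by
        have hper : ∀ p < M, ∑ ℓ ∈ range (M+1), Kf i ℓ * mm (ℓ+p+1)
            = if i = p+1 then 1 else 0 := by
          intro p hp
          rw [← hKHb i hi (p+1) (by omega)]
          refine Finset.sum_congr rfl fun ℓ _ => ?_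
          rw [show ℓ+p+1 = ℓ+(p+1) by omega]
        have h1 : ∑ p ∈ range M, (∑ ℓ ∈ range (M+1), Kf i ℓ * mm (ℓ+p+1)) * Kf p j
            = ∑ p ∈ range M, (if i = p+1 then Kf p j else 0) := by
          refine Finset.sum_congr rfl fun p hp => ?_
          rw [hper p (mem_range.mp hp)]
          split <;> simp
        rw [h1]
        by_cases hi1 : 1 ≤ i
        · rw [if_pos hi1]
          rw [Finset.sum_eq_single_of_mem (i-1) (by simp [mem_range]; omega)]
          · rw [if_pos (by omega)]
          · intro p hp hne
            rw [if_neg (by omega)]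
        · rw [if_neg hi1]
          exact Finset.sum_eq_zero fun p _ => by rw [if_neg (by omega)]
      rw [hmain, ← sub_eq_add_neg]
    have heq := way1.symm.trans (hX.trans way2)
    have h2 := sub_eq_sub_iff_sub_eq_sub.mp heq
    rw [hDK i hi, hCK j hj]
    simp only [Nat.add_sub_cancel]
    exact h2
  -- boundary cases
  intro i hi j hj
  by_cases hiN : i < N
  · by_cases hjN : j < N
    · rw [if_pos hiN, if_pos hjN]
      exact hdisp i hiN j hjN
    · have hjj : N = j := by omega
      subst hjj
      rw [if_pos hiN, if_neg hjN, hAN, mul_one, mul_zero, sub_zero]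
      rw [if_pos hN]
      rw [hKf0 (i-1) N (by omega)]
      rw [hDK i hiN]
      simp
  · have hii : N = i := by omega
    subst hii
    by_cases hjN : j < N
    · rw [if_neg hiN, if_pos hjN, zero_mul, hBN, one_mul]
      rw [if_pos hN, hKf0 N (j-1) (by omega)]
      rw [hCK j hjN]
      simp
    · have hjj : N = j := by omega
      subst hjj
      rw [if_neg hiN, if_neg hjN, zero_mul, mul_zero, sub_zero]
      rw [if_pos hN, if_pos hN, hKf0 N (N-1) (by omega), hKf0 (N-1) N (by omega)]
      simp
end


section
variable {r N : ℕ}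

lemma pick_right (X : ℕ → Matrix (Fin r) (Fin r) ℂ) {j : ℕ} (hj : j < N) :
    ∑ p ∈ range N, X p * (if p = j then (1:Matrix (Fin r) (Fin r) ℂ) else 0) = X j := by
  have h1 : ∑ p ∈ range N, X p * (if p = j then (1:Matrix (Fin r) (Fin r) ℂ) else 0)
      = ∑ p ∈ range N, (if p = j then X p else 0) :=
    Finset.sum_congr rfl fun p _ => by split <;> simp
  rw [h1, Finset.sum_ite_eq' (range N) j X, if_pos (mem_range.mpr hj)]

lemma pick_right' (X : ℕ → Matrix (Fin r) (Fin r) ℂ) {j : ℕ} (hj : j < N) :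
    ∑ p ∈ range N, (if j = p then (1:Matrix (Fin r) (Fin r) ℂ) else 0) * X p = X j := by
  have h1 : ∑ p ∈ range N, (if j = p then (1:Matrix (Fin r) (Fin r) ℂ) else 0) * X p
      = ∑ p ∈ range N, (if j = p then X p else 0) :=
    Finset.sum_congr rfl fun p _ => by split <;> simp
  rw [h1, Finset.sum_ite_eq (range N) j X, if_pos (mem_range.mpr hj)]

lemma eval_triple_left (mm : ℕ → Matrix (Fin r) (Fin r) ℂ)
    (Kf : ℕ → ℕ → Matrix (Fin r) (Fin r) ℂ)
    (hHKb : ∀ i < N, ∀ j < N, ∑ p ∈ Finset.range N, mm (i+p) * Kf p j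
      = if i = j then 1 else 0)
    (S : ℕ → Matrix (Fin r) (Fin r) ℂ) (z : ℂ) :
    ∑ k ∈ (range N ×ˢ (range N ×ˢ range N)),
        S k.1 * mm (k.1 + k.2.1) * ((z ^ k.2.2 : ℂ) • Kf k.2.1 k.2.2)
      = ∑ j ∈ range N, z ^ j • S j := by
  rw [Finset.sum_product]
  have h1 : ∀ i, ∑ k2 ∈ (range N ×ˢ range N),
      S i * mm (i + k2.1) * ((z ^ k2.2 : ℂ) • Kf k2.1 k2.2)
      = ∑ i' ∈ range N, ∑ j ∈ range N, (z ^ j : ℂ) • (S i * mm (i + i') * Kf i' j) := by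
    intro i
    rw [Finset.sum_product]
    exact Finset.sum_congr rfl fun i' _ => Finset.sum_congr rfl fun j _ => by
      rw [mul_smul_comm]
  calc ∑ i ∈ range N, ∑ k2 ∈ (range N ×ˢ range N),
        S i * mm (i + k2.1) * ((z ^ k2.2 : ℂ) • Kf k2.1 k2.2)
      = ∑ i ∈ range N, ∑ i' ∈ range N, ∑ j ∈ range N,
          (z ^ j : ℂ) • (S i * mm (i + i') * Kf i' j) :=
        Finset.sum_congr rfl fun i _ => h1 i
    _ = ∑ i ∈ range N, ∑ j ∈ range N, ∑ i' ∈ range N,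
          (z ^ j : ℂ) • (S i * mm (i + i') * Kf i' j) :=
        Finset.sum_congr rfl fun i _ => Finset.sum_comm
    _ = ∑ j ∈ range N, ∑ i ∈ range N, ∑ i' ∈ range N,
          (z ^ j : ℂ) • (S i * mm (i + i') * Kf i' j) := Finset.sum_comm
    _ = ∑ j ∈ range N, z ^ j • S j := by
        have inner : ∀ j < N, ∑ i ∈ range N, ∑ i' ∈ range N,
            (S i * mm (i+i') * Kf i' j) = S j := by
          intro j hj
          have h2 : ∀ i < N, ∑ i' ∈ range N, S i * mm (i+i') * Kf i' j
              = S i * (if i = j then 1 else 0) := by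
            intro i hi
            rw [← hHKb i hi j hj, Finset.mul_sum]
            exact Finset.sum_congr rfl fun i' _ => mul_assoc _ _ _
          calc ∑ i ∈ range N, ∑ i' ∈ range N, S i * mm (i+i') * Kf i' j
              = ∑ i ∈ range N, S i * (if i = j then 1 else 0) :=
                Finset.sum_congr rfl fun i hi => h2 i (mem_range.mp hi)
            _ = S j := pick_right S hj
        refine Finset.sum_congr rfl fun j hj => ?_
        rw [← inner j (mem_range.mp hj)]
        simp only [Finset.smul_sum]

lemma eval_triple_right (mm : ℕ → Matrix (Fin r) (Fin r) ℂ)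
    (Kf : ℕ → ℕ → Matrix (Fin r) (Fin r) ℂ)
    (hKHb : ∀ i < N, ∀ j < N, ∑ p ∈ Finset.range N, Kf i p * mm (p+j)
      = if i = j then 1 else 0)
    (S : ℕ → Matrix (Fin r) (Fin r) ℂ) (w : ℂ) :
    ∑ k ∈ (range N ×ˢ (range N ×ˢ range N)),
        ((w ^ k.1 : ℂ) • Kf k.1 k.2.1) * mm (k.2.1 + k.2.2) * S k.2.2
      = ∑ i ∈ range N, w ^ i • S i := by
  rw [Finset.sum_product]
  refine Finset.sum_congr rfl fun i hi => ?_
  rw [Finset.sum_product]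
  have h1 : ∑ j ∈ range N, ∑ k ∈ range N,
      ((w ^ i : ℂ) • Kf i j) * mm (j + k) * S k
      = (w ^ i : ℂ) • ∑ j ∈ range N, ∑ k ∈ range N, Kf i j * mm (j + k) * S k := by
    simp only [Finset.smul_sum]
    exact Finset.sum_congr rfl fun j _ => Finset.sum_congr rfl fun k _ => by
      rw [smul_mul_assoc, smul_mul_assoc]
  rw [h1]
  congr 1
  have h2 : ∑ j ∈ range N, ∑ k ∈ range N, Kf i j * mm (j + k) * S k
      = ∑ k ∈ range N, (∑ j ∈ range N, Kf i j * mm (j + k)) * S k := by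
    rw [Finset.sum_comm]
    exact Finset.sum_congr rfl fun k _ => by rw [Finset.sum_mul]
  rw [h2]
  calc ∑ k ∈ range N, (∑ j ∈ range N, Kf i j * mm (j + k)) * S k
      = ∑ k ∈ range N, (if i = k then (1:Matrix (Fin r) (Fin r) ℂ) else 0) * S k :=
        Finset.sum_congr rfl fun k hk =>
          by rw [hKHb i (mem_range.mp hi) k (mem_range.mp hk)]
    _ = S i := pick_right' S (mem_range.mp hi)

lemma cd_sum (hN : 1 ≤ N)
    (A B C D : ℕ → Matrix (Fin r) (Fin r) ℂ)
    (Kf : ℕ → ℕ → Matrix (Fin r) (Fin r) ℂ)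
    (hKf0 : ∀ i j, ¬(i < N ∧ j < N) → Kf i j = 0)
    (hE : ∀ i < N+1, ∀ j < N+1,
      ((if 1 ≤ j then Kf i (j-1) else 0) - (if 1 ≤ i then Kf (i-1) j else 0))
        = (if i < N then D i else 0) * A j - B i * (if j < N then C j else 0))
    (w z : ℂ) :
    (z - w) • (∑ i ∈ range N, ∑ j ∈ range N, ((w^i * z^j : ℂ)) • Kf i j)
      = (∑ i ∈ range N, (w^i : ℂ) • D i) * (∑ j ∈ range (N+1), (z^j : ℂ) • A j)
        - (∑ i ∈ range (N+1), (w^i : ℂ) • B i) * (∑ j ∈ range N, (z^j : ℂ) • C j) := by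
  have hzR : z • (∑ i ∈ range N, ∑ j ∈ range N, ((w^i * z^j : ℂ)) • Kf i j)
      = ∑ i ∈ range (N+1), ∑ j ∈ range (N+1),
          ((w^i * z^j : ℂ)) • (if 1 ≤ j then Kf i (j-1) else 0) := by
    rw [Finset.sum_range_succ]
    have hlast : ∑ j ∈ range (N+1), ((w^N * z^j : ℂ)) • (if 1 ≤ j then Kf N (j-1) else 0)
        = 0 := by
      refine Finset.sum_eq_zero fun j _ => ?_
      split
      · rw [hKf0 N (j-1) (by omega), smul_zero]
      · rw [smul_zero]
    rw [hlast, add_zero]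
    rw [Finset.smul_sum]
    refine Finset.sum_congr rfl fun i _ => ?_
    rw [Finset.sum_range_succ']
    simp only [Nat.add_sub_cancel, if_pos (Nat.le_add_left 1 _), pow_zero, mul_one]
    have h0 : ((w^i : ℂ)) • (if 1 ≤ 0 then Kf i (0-1) else 0) = 0 := by
      rw [if_neg (by omega), smul_zero]
    rw [h0, add_zero, Finset.smul_sum]
    refine Finset.sum_congr rfl fun j _ => ?_
    rw [smul_smul]
    congr 1
    ring
  have hwR : w • (∑ i ∈ range N, ∑ j ∈ range N, ((w^i * z^j : ℂ)) • Kf i j)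
      = ∑ i ∈ range (N+1), ∑ j ∈ range (N+1),
          ((w^i * z^j : ℂ)) • (if 1 ≤ i then Kf (i-1) j else 0) := by
    rw [Finset.sum_range_succ']
    have hfirst : ∑ j ∈ range (N+1), ((w^0 * z^j : ℂ)) • (if 1 ≤ 0 then Kf (0-1) j else 0)
        = 0 := by
      refine Finset.sum_eq_zero fun j _ => ?_
      rw [if_neg (by omega), smul_zero]
    rw [hfirst, add_zero]
    rw [Finset.smul_sum]
    refine Finset.sum_congr rfl fun i _ => ?_
    simp only [Nat.add_sub_cancel, if_pos (Nat.le_add_left 1 _)]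
    rw [Finset.sum_range_succ]
    have hlast : ((w^(i+1) * z^N : ℂ)) • Kf i N = 0 := by
      rw [hKf0 i N (by omega), smul_zero]
    rw [hlast, add_zero, Finset.smul_sum]
    refine Finset.sum_congr rfl fun j _ => ?_
    rw [smul_smul]
    congr 1
    ring
  have hQRPL : (∑ i ∈ range N, (w^i : ℂ) • D i) * (∑ j ∈ range (N+1), (z^j : ℂ) • A j)
      = ∑ i ∈ range (N+1), ∑ j ∈ range (N+1),
          ((w^i * z^j : ℂ)) • ((if i < N then D i else 0) * A j) := by
    have hext : ∑ i ∈ range N, (w^i : ℂ) • D i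
        = ∑ i ∈ range (N+1), (w^i : ℂ) • (if i < N then D i else 0) := by
      rw [Finset.sum_range_succ, if_neg (by omega), smul_zero, add_zero]
      exact Finset.sum_congr rfl fun i hi => by rw [if_pos (mem_range.mp hi)]
    rw [hext, Finset.sum_mul_sum]
    refine Finset.sum_congr rfl fun i _ => Finset.sum_congr rfl fun j _ => ?_
    rw [smul_mul_assoc, mul_smul_comm, smul_smul]
  have hPRQL : (∑ i ∈ range (N+1), (w^i : ℂ) • B i) * (∑ j ∈ range N, (z^j : ℂ) • C j)
      = ∑ i ∈ range (N+1), ∑ j ∈ range (N+1),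
          ((w^i * z^j : ℂ)) • (B i * (if j < N then C j else 0)) := by
    have hext : ∑ j ∈ range N, (z^j : ℂ) • C j
        = ∑ j ∈ range (N+1), (z^j : ℂ) • (if j < N then C j else 0) := by
      rw [Finset.sum_range_succ, if_neg (by omega), smul_zero, add_zero]
      exact Finset.sum_congr rfl fun j hj => by rw [if_pos (mem_range.mp hj)]
    rw [hext, Finset.sum_mul_sum]
    refine Finset.sum_congr rfl fun i _ => Finset.sum_congr rfl fun j _ => ?_
    rw [smul_mul_assoc, mul_smul_comm, smul_smul]
  rw [sub_smul, hzR, hwR, hQRPL, hPRQL]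
  rw [← Finset.sum_sub_distrib, ← Finset.sum_sub_distrib]
  refine Finset.sum_congr rfl fun i hi => ?_
  rw [← Finset.sum_sub_distrib, ← Finset.sum_sub_distrib]
  refine Finset.sum_congr rfl fun j hj => ?_
  rw [← smul_sub, ← smul_sub]
  rw [hE i (mem_range.mp hi) j (mem_range.mp hj)]
end

/-- **Christoffel–Darboux formula.** Given the monic left/right matrix
orthogonal polynomials `P_N^L, P_N^R` of degree `N` and the normalized left/right matrix
orthogonal polynomials `Q_{N-1}^L, Q_{N-1}^R` of degree `≤ N - 1`, there is a bivariate
matrix polynomial `R` of degree `≤ N - 1` in each variable with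
`(z - w) • R w z = Q_{N-1}^R(w) P_N^L(z) - P_N^R(w) Q_{N-1}^L(z)`, which is both a left
and a right reproducing kernel of order `N` for `W` on `γ`. -/
theorem stmt6 (r N : ℕ) (hr : 1 ≤ r) (hN : 1 ≤ N)
    (γ : ℝ → ℂ) (hγ : ContDiffOn ℝ 1 γ (Set.Icc 0 1))
    (W : ℂ → Matrix (Fin r) (Fin r) ℂ) (hW : ContinuousOn W (γ '' Set.Icc 0 1))
    (PL PR QL QR : ℂ → Matrix (Fin r) (Fin r) ℂ)
    (hPL : IsMonicMatPoly r N PL)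
    (hPLorth : ∀ ℓ < N, contourIntegralM γ (fun z => z ^ ℓ • (PL z * W z)) = 0)
    (hPR : IsMonicMatPoly r N PR)
    (hPRorth : ∀ ℓ < N, contourIntegralM γ (fun z => z ^ ℓ • (W z * PR z)) = 0)
    (hQL : IsMatPoly r r (N - 1) QL)
    (hQLorth : ∀ ℓ < N, contourIntegralM γ (fun z => z ^ ℓ • (QL z * W z)) =
      if ℓ = N - 1 then 1 else 0)
    (hQR : IsMatPoly r r (N - 1) QR)
    (hQRorth : ∀ ℓ < N, contourIntegralM γ (fun z => z ^ ℓ • (W z * QR z)) =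
      if ℓ = N - 1 then 1 else 0) :
    ∃ R : ℂ → ℂ → Matrix (Fin r) (Fin r) ℂ,
      (∀ w z : ℂ, (z - w) • R w z = QR w * PL z - PR w * QL z) ∧
      IsLeftReproducingKernel r N γ W R ∧
      IsRightReproducingKernel r N γ W R := by
  classical
  obtain ⟨A, hAN, hA⟩ := hPL
  obtain ⟨B, hBN, hB⟩ := hPR
  obtain ⟨C, hC⟩ := hQL
  obtain ⟨D, hD⟩ := hQR
  have hNN : N - 1 + 1 = N := by omega
  rw [hNN] at hC hD
  set mm : ℕ → Matrix (Fin r) (Fin r) ℂ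
    := fun k => contourIntegralM γ (fun z => z ^ k • W z) with hmmdef
  have rel1 : ∀ ℓ < N, ∑ p ∈ Finset.range (N+1), A p * mm (p+ℓ) = 0 := by
    intro ℓ hℓ
    have h0 := hPLorth ℓ hℓ
    have heq : (fun z : ℂ => z ^ ℓ • (PL z * W z))
        = fun z => ∑ p ∈ Finset.range (N+1), z ^ (p+ℓ) • (A p * W z * 1) := by
      funext z
      rw [hA z, Finset.sum_mul, Finset.smul_sum]
      refine Finset.sum_congr rfl fun p _ => ?_
      rw [mul_one, Matrix.smul_mul, smul_smul, ← pow_add, add_comm ℓ p]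
    rw [heq, master hγ hW (Finset.range (N+1)) (fun p => p+ℓ) A (fun _ => 1)] at h0
    simpa using h0
  have rel2 : ∀ ℓ < N, ∑ p ∈ Finset.range (N+1), mm (ℓ+p) * B p = 0 := by
    intro ℓ hℓ
    have h0 := hPRorth ℓ hℓ
    have heq : (fun z : ℂ => z ^ ℓ • (W z * PR z))
        = fun z => ∑ p ∈ Finset.range (N+1), z ^ (ℓ+p) • ((1:Matrix (Fin r) (Fin r) ℂ) * W z * B p) := by
      funext z
      rw [hB z, Finset.mul_sum, Finset.smul_sum]
      refine Finset.sum_congr rfl fun p _ => ?_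
      rw [one_mul, Matrix.mul_smul, smul_smul, ← pow_add]
    rw [heq, master hγ hW (Finset.range (N+1)) (fun p => ℓ+p) (fun _ => 1) B] at h0
    simpa using h0
  have rel3 : ∀ ℓ < N, ∑ p ∈ Finset.range N, C p * mm (p+ℓ)
      = (if ℓ = N-1 then (1:Matrix (Fin r) (Fin r) ℂ) else 0) := by
    intro ℓ hℓ
    have h0 := hQLorth ℓ hℓ
    have heq : (fun z : ℂ => z ^ ℓ • (QL z * W z))
        = fun z => ∑ p ∈ Finset.range N, z ^ (p+ℓ) • (C p * W z * 1) := by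
      funext z
      rw [hC z, Finset.sum_mul, Finset.smul_sum]
      refine Finset.sum_congr rfl fun p _ => ?_
      rw [mul_one, Matrix.smul_mul, smul_smul, ← pow_add, add_comm ℓ p]
    rw [heq, master hγ hW (Finset.range N) (fun p => p+ℓ) C (fun _ => 1)] at h0
    simpa using h0
  have rel4 : ∀ ℓ < N, ∑ p ∈ Finset.range N, mm (ℓ+p) * D p
      = (if ℓ = N-1 then (1:Matrix (Fin r) (Fin r) ℂ) else 0) := by
    intro ℓ hℓ
    have h0 := hQRorth ℓ hℓ
    have heq : (fun z : ℂ => z ^ ℓ • (W z * QR z))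
        = fun z => ∑ p ∈ Finset.range N, z ^ (ℓ+p) • ((1:Matrix (Fin r) (Fin r) ℂ) * W z * D p) := by
      funext z
      rw [hD z, Finset.mul_sum, Finset.smul_sum]
      refine Finset.sum_congr rfl fun p _ => ?_
      rw [one_mul, Matrix.mul_smul, smul_smul, ← pow_add]
    rw [heq, master hγ hW (Finset.range N) (fun p => ℓ+p) (fun _ => 1) D] at h0
    simpa using h0
  obtain ⟨Kf, hHKb, hKHb, hKf0⟩ := exists_Kf hr hN mm B D rel2 hBN rel4
  have hE := hE_lemma hN mm A B C D Kf hAN hBN rel1 rel2 rel3 rel4 hHKb hKHb hKf0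
  refine ⟨fun w z => ∑ i ∈ Finset.range N, ∑ j ∈ Finset.range N, ((w^i * z^j : ℂ)) • Kf i j,
    ?_, ?_, ?_⟩
  · intro w z
    rw [hA z, hB w, hC z, hD w]
    exact cd_sum hN A B C D Kf hKf0 hE w z
  · refine ⟨?_, ?_, ?_⟩
    · intro z
      refine ⟨fun i => ∑ j ∈ Finset.range N, (z^j : ℂ) • Kf i j, fun w => ?_⟩
      beta_reduce
      rw [hNN]
      refine Finset.sum_congr rfl fun i _ => ?_
      rw [Finset.smul_sum]
      exact Finset.sum_congr rfl fun j _ => by rw [smul_smul]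
    · intro w
      refine ⟨fun j => ∑ i ∈ Finset.range N, (w^i : ℂ) • Kf i j, fun z => ?_⟩
      beta_reduce
      rw [hNN, Finset.sum_comm]
      refine Finset.sum_congr rfl fun j _ => ?_
      rw [Finset.smul_sum]
      refine Finset.sum_congr rfl fun i _ => ?_
      rw [smul_smul]
      congr 1
      ring
    · intro P hP z
      obtain ⟨S, hS⟩ := hP
      rw [hNN] at hS
      have heq : (fun w => P w * W w
            * (∑ i ∈ Finset.range N, ∑ j ∈ Finset.range N, ((w^i * z^j : ℂ)) • Kf i j))
          = fun w => ∑ k ∈ (Finset.range N ×ˢ (Finset.range N ×ˢ Finset.range N)),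
              w ^ (k.1 + k.2.1) • (S k.1 * W w * ((z ^ k.2.2 : ℂ) • Kf k.2.1 k.2.2)) := by
        funext w
        rw [hS w]
        rw [Finset.sum_product]
        rw [Finset.sum_mul, Finset.sum_mul]
        refine Finset.sum_congr rfl fun i _ => ?_
        rw [Finset.sum_product]
        rw [Finset.mul_sum]
        refine Finset.sum_congr rfl fun i' _ => ?_
        rw [Finset.mul_sum]
        refine Finset.sum_congr rfl fun j _ => ?_
        rw [Matrix.smul_mul, smul_mul_assoc, Matrix.mul_smul, smul_smul]
        rw [mul_smul_comm, smul_smul]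
        congr 1
        ring
      rw [heq, master hγ hW _ _ _ _]
      rw [eval_triple_left mm Kf hHKb S z]
      exact (hS z).symm
  · refine ⟨?_, ?_, ?_⟩
    · intro z
      refine ⟨fun i => ∑ j ∈ Finset.range N, (z^j : ℂ) • Kf i j, fun w => ?_⟩
      beta_reduce
      rw [hNN]
      refine Finset.sum_congr rfl fun i _ => ?_
      rw [Finset.smul_sum]
      exact Finset.sum_congr rfl fun j _ => by rw [smul_smul]
    · intro w
      refine ⟨fun j => ∑ i ∈ Finset.range N, (w^i : ℂ) • Kf i j, fun z => ?_⟩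
      beta_reduce
      rw [hNN, Finset.sum_comm]
      refine Finset.sum_congr rfl fun j _ => ?_
      rw [Finset.smul_sum]
      refine Finset.sum_congr rfl fun i _ => ?_
      rw [smul_smul]
      congr 1
      ring
    · intro P hP w
      obtain ⟨S, hS⟩ := hP
      rw [hNN] at hS
      have heq : (fun z => (∑ i ∈ Finset.range N, ∑ j ∈ Finset.range N,
              ((w^i * z^j : ℂ)) • Kf i j) * W z * P z)
          = fun z => ∑ k ∈ (Finset.range N ×ˢ (Finset.range N ×ˢ Finset.range N)),
              z ^ (k.2.1 + k.2.2)
                • (((w ^ k.1 : ℂ) • Kf k.1 k.2.1) * W z * S k.2.2) := by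
        funext z
        rw [hS z]
        rw [Finset.sum_product]
        rw [Finset.sum_mul, Finset.sum_mul]
        refine Finset.sum_congr rfl fun i _ => ?_
        rw [Finset.sum_product]
        rw [Finset.sum_mul, Finset.sum_mul]
        refine Finset.sum_congr rfl fun j _ => ?_
        rw [Finset.mul_sum]
        refine Finset.sum_congr rfl fun k _ => ?_
        rw [Matrix.smul_mul, smul_mul_assoc, Matrix.mul_smul, smul_smul]
        rw [Matrix.smul_mul, smul_mul_assoc, smul_smul]
        congr 1
        ring
      rw [heq, master hγ hW _ _ _ _]
      rw [eval_triple_right mm Kf hKHb S w]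
      exact (hS w).symm
end

section
/- Let a₀₀, a₀₁, a₁₀, a₁₁, b₀₀, b₀₁, b₁₀, b₁₁ > 0 be real numbers and set a₋ = a₁₁a₀₀ − a₀₁a₁₀, b₋ = b₀₁b₁₁ − b₀₀b₁₀, c₀ = (a₀₀b₁₁+a₁₀b₀₀)(a₁₁b₀₁+a₀₁b₁₀), c₁ = (a₀₁b₁₁+a₁₁b₀₀)(a₁₀b₀₁+a₀₀b₁₀). Then (c₀+c₁)² − a₋²·b₋² > 0. Moreover, if a₋ ≠ 0 and b₋ ≠ 0, then setting z₊ = (−(c₀+c₁) + √((c₀+c₁)² − a₋²b₋²))/a₋² and z₋ = (−(c₀+c₁) − √((c₀+c₁)² − a₋²b₋²))/a₋², one has z₋ < z₊ < 0, and the number c = (√(−z₋) − √(−z₊))/(√(−z₋) + √(−z₊)) satisfies 0 < c < 1. -/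
/-- For positive parameters, `(c₀+c₁)² - a₋² b₋² > 0`; and when
`a₋ ≠ 0` and `b₋ ≠ 0`, the roots `z₋ < z₊ < 0` of `a₋² z² + 2(c₀+c₁) z + b₋²` are
negative and the quantity `c = (√(-z₋) - √(-z₊))/(√(-z₋) + √(-z₊))` lies in `(0,1)`. -/
theorem stmt18 (a00 a01 a10 a11 b00 b01 b10 b11 : ℝ)
    (ha00 : 0 < a00) (ha01 : 0 < a01) (ha10 : 0 < a10) (ha11 : 0 < a11)
    (hb00 : 0 < b00) (hb01 : 0 < b01) (hb10 : 0 < b10) (hb11 : 0 < b11) :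
    let am := a11 * a00 - a01 * a10
    let bm := b01 * b11 - b00 * b10
    let c0 := (a00 * b11 + a10 * b00) * (a11 * b01 + a01 * b10)
    let c1 := (a01 * b11 + a11 * b00) * (a10 * b01 + a00 * b10)
    0 < (c0 + c1) ^ 2 - am ^ 2 * bm ^ 2 ∧
      (am ≠ 0 → bm ≠ 0 →
        let zp := (-(c0 + c1) + Real.sqrt ((c0 + c1) ^ 2 - am ^ 2 * bm ^ 2)) / am ^ 2
        let zm := (-(c0 + c1) - Real.sqrt ((c0 + c1) ^ 2 - am ^ 2 * bm ^ 2)) / am ^ 2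
        let c := (Real.sqrt (-zm) - Real.sqrt (-zp)) / (Real.sqrt (-zm) + Real.sqrt (-zp))
        zm < zp ∧ zp < 0 ∧ 0 < c ∧ c < 1) := by
  intro am bm c0 c1
  have hc0 : 0 < c0 := by positivity
  have hc1 : 0 < c1 := by positivity
  have hkey : (c0 + c1) ^ 2 - am ^ 2 * bm ^ 2 = 4 * c0 * c1 := by
    simp only [am, bm, c0, c1]; ring
  have hdisc : 0 < (c0 + c1) ^ 2 - am ^ 2 * bm ^ 2 := by
    rw [hkey]; positivity
  refine ⟨hdisc, fun ham hbm => ?_⟩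
  intro zp zm c
  have ham2 : 0 < am ^ 2 := by positivity
  have hS : 0 < Real.sqrt ((c0 + c1) ^ 2 - am ^ 2 * bm ^ 2) := Real.sqrt_pos.mpr hdisc
  have hSlt : Real.sqrt ((c0 + c1) ^ 2 - am ^ 2 * bm ^ 2) < c0 + c1 := by
    have h1 : (c0 + c1) ^ 2 - am ^ 2 * bm ^ 2 < (c0 + c1) ^ 2 := by
      have : 0 < am ^ 2 * bm ^ 2 := by
        have : 0 < bm ^ 2 := by positivity
        positivity
      linarith
    calc Real.sqrt ((c0 + c1) ^ 2 - am ^ 2 * bm ^ 2)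
        < Real.sqrt ((c0 + c1) ^ 2) := Real.sqrt_lt_sqrt (le_of_lt hdisc) h1
      _ = c0 + c1 := Real.sqrt_sq (by positivity)
  have hzmzp : zm < zp := by
    apply div_lt_div_of_pos_right (by linarith) ham2
  have hzp : zp < 0 := div_neg_of_neg_of_pos (by linarith) ham2
  have hzm : zm < 0 := lt_trans hzmzp hzp
  have hnzp : 0 < -zp := by linarith
  have hnzm : 0 < -zm := by linarith
  have hsqlt : Real.sqrt (-zp) < Real.sqrt (-zm) :=
    Real.sqrt_lt_sqrt (le_of_lt hnzp) (by
      show -zp < -zm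
      simp only [zp, zm, neg_div]
      rw [neg_lt_neg_iff]
      exact hzmzp)
  have hsp : 0 < Real.sqrt (-zp) := Real.sqrt_pos.mpr hnzp
  have hsm : 0 < Real.sqrt (-zm) := Real.sqrt_pos.mpr hnzm
  refine ⟨hzmzp, hzp, ?_, ?_⟩
  · exact div_pos (by linarith) (by linarith)
  · rw [div_lt_one (by linarith)]; linarith
end
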